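/- nnz bound for the product: if each row of Q has at most T nonzeros and, for each tree t, each leaf of tree t contains at most ℓ samples, then each row of P = Q Wᵀ (with Q, W the WLCP factors) has at most T·ℓ nonzero entries, hence nnz(P) ≤ N·T·ℓ. -/
import Mathlib


/-- nnz bound for the product: if every leaf holds at most `l` samples, each row of
`P = Q Wᵀ` has at most `T·l` nonzeros, hence `nnz(P) ≤ N·T·l`. -/
theorem product_nnz_bound
    {T N : ℕ} (L : Fin T → Type) [∀ t, Fintype (L t)] [∀ t, DecidableEq (L t)]
    (ℓ : Fin N → ∀ t, L t) (q w : Fin N → Fin T → ℝ)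
    (Q W : Matrix (Fin N) (Σ t, L t) ℝ)
    (hQ : ∀ i k, Q i k = q i k.1 * (if ℓ i k.1 = k.2 then (1 : ℝ) else 0))
    (hW : ∀ j k, W j k = w j k.1 * (if ℓ j k.1 = k.2 then (1 : ℝ) else 0))
    (l : ℕ)
    (hleaf : ∀ k : Σ t, L t,
      (Finset.univ.filter (fun j : Fin N => ℓ j k.1 = k.2)).card ≤ l) :
    (∀ i, (Finset.univ.filter
        (fun j : Fin N => (Q * W.transpose) i j ≠ 0)).card ≤ T * l) ∧
      (Finset.univ.filter
        (fun p : Fin N × Fin N => (Q * W.transpose) p.1 p.2 ≠ 0)).card ≤ N * T * l := by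
  have key : ∀ i j, (Q * W.transpose) i j ≠ 0 → ∃ t, ℓ j t = ℓ i t := by
    intro i j h
    by_contra hc
    push_neg at hc
    apply h
    simp only [Matrix.mul_apply, Matrix.transpose_apply]
    apply Finset.sum_eq_zero
    intro k _
    rw [hQ, hW]
    by_cases h1 : ℓ i k.1 = k.2
    · have h2 : ℓ j k.1 ≠ k.2 := by
        intro h3
        exact hc k.1 (h3.trans h1.symm)
      simp [h2]
    · simp [h1]
  have row : ∀ i, (Finset.univ.filter
      (fun j : Fin N => (Q * W.transpose) i j ≠ 0)).card ≤ T * l := by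
    intro i
    have hsub : Finset.univ.filter (fun j : Fin N => (Q * W.transpose) i j ≠ 0) ⊆
        Finset.univ.biUnion (fun t : Fin T =>
          Finset.univ.filter (fun j : Fin N => ℓ j t = ℓ i t)) := by
      intro j hj
      simp only [Finset.mem_filter, Finset.mem_univ, true_and] at hj
      obtain ⟨t, ht⟩ := key i j hj
      exact Finset.mem_biUnion.2 ⟨t, Finset.mem_univ t, by simp [ht]⟩
    calc (Finset.univ.filter (fun j : Fin N => (Q * W.transpose) i j ≠ 0)).card
        ≤ _ := Finset.card_le_card hsub
      _ ≤ ∑ t : Fin T, (Finset.univ.filter (fun j : Fin N => ℓ j t = ℓ i t)).card :=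
          Finset.card_biUnion_le
      _ ≤ ∑ _t : Fin T, l := Finset.sum_le_sum (fun t _ => hleaf ⟨t, ℓ i t⟩)
      _ = T * l := by simp [Finset.sum_const, Finset.card_univ]
  refine ⟨row, ?_⟩
  have hcard : (Finset.univ.filter
      (fun p : Fin N × Fin N => (Q * W.transpose) p.1 p.2 ≠ 0)).card
      = ∑ i : Fin N, (Finset.univ.filter
          (fun j : Fin N => (Q * W.transpose) i j ≠ 0)).card := by
    rw [Finset.card_filter, Fintype.sum_prod_type]
    simp [Finset.card_filter]
  rw [hcard, mul_assoc]
  calc ∑ i : Fin N, (Finset.univ.filter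
        (fun j : Fin N => (Q * W.transpose) i j ≠ 0)).card
      ≤ ∑ _i : Fin N, T * l := Finset.sum_le_sum (fun i _ => row i)
    _ = N * (T * l) := by simp [Finset.sum_const, Finset.card_univ]
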